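/- For every complete binary tree T with n ≥ 2 leaves, the number of admissible labellings of T equals the number of permutations σ ∈ S_{n−1} whose decreasing tree DT(σ) has shape t, where t is the binary tree formed by the internal nodes of T. -/

import Mathlib

/-- (Incomplete) binary trees; `nil` is the empty tree. -/
inductive BT
  | nil : BT
  | nd : BT → BT → BT
deriving DecidableEq

/-- Number of nodes of a binary tree. -/
def BT.nodes : BT → ℕ
  | .nil => 0
  | .nd l r => l.nodes + r.nodes + 1

/-- The set of permutation words of {1, …, n}. -/
def permWords (n : ℕ) : Finset (List ℕ) := (List.range' 1 n).permutations.toFinset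

/-- Whether the word `w` is an admissible labelling of the complete binary tree whose internal
nodes form `t`: at each internal node, the smallest label below it lies in the left subtree and
the largest in the right subtree. -/
def admB : BT → List ℕ → Bool
  | .nil, _ => true
  | .nd l r, w =>
    admB l (w.take (l.nodes + 1)) && admB r (w.drop (l.nodes + 1))
      && decide ((w.take (l.nodes + 1)).minimum = w.minimum)
      && decide ((w.drop (l.nodes + 1)).maximum = w.maximum)

/-- Fuel-based helper computing the shape of the decreasing tree of a word: the root is the
largest letter, with left/right subtrees the decreasing trees of the factors to its left/right. -/
def dtShapeAux : ℕ → List ℕ → BT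
  | 0, _ => BT.nil
  | f + 1, w =>
    if w = [] then BT.nil
    else
      let i := w.idxOf (w.foldr max 0)
      BT.nd (dtShapeAux f (w.take i)) (dtShapeAux f (w.drop (i + 1)))

/-- The shape of the decreasing tree of a word with distinct letters. -/
def dtShape (w : List ℕ) : BT := dtShapeAux w.length w

/-! Both counts satisfy the recursion `f (nd l r) = (|l| + |r|).choose |l| * f l * f r`, which
defines the number of heap orderings of `t`. A word over a label set `S` is admissible for
`nd l r` iff its first `|l| + 1` letters are admissible for `l` and contain `min S`, and the
remaining letters are admissible for `r` and contain `max S`. A word has decreasing-tree shape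
`nd l r` iff `max S` stands at position `|l|`, with words of shapes `l` and `r` on either side.
In both cases the letters of the left factor form an arbitrary set of the right size subject to
the constraint on `min S` and `max S`, and there are `(|l| + |r|).choose |l|` such sets. -/

open Finset

section Words

variable {α : Type*} [DecidableEq α]

noncomputable def wordsOf (S : Finset α) : Finset (List α) := S.toList.permutations.toFinset

lemma mem_wordsOf {S : Finset α} {w : List α} : w ∈ wordsOf S ↔ (w : Multiset α) = S.val := by
  rw [wordsOf, List.mem_toFinset, List.mem_permutations, ← Multiset.coe_eq_coe,
    Finset.coe_toList]

lemma card_wordsOf (S : Finset α) : #(wordsOf S) = (#S).factorial := by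
  rw [wordsOf, List.toFinset_card_of_nodup (List.nodup_permutations _ S.nodup_toList),
    List.length_permutations, Finset.length_toList]

variable {S : Finset α} {w : List α}

lemma nodup_of_mem_wordsOf (hw : w ∈ wordsOf S) : w.Nodup := by
  rw [← Multiset.coe_nodup, mem_wordsOf.1 hw]
  exact S.nodup

lemma length_of_mem_wordsOf (hw : w ∈ wordsOf S) : w.length = #S := by
  rw [← Multiset.coe_card, mem_wordsOf.1 hw, Finset.card_val]

lemma mem_iff_of_mem_wordsOf (hw : w ∈ wordsOf S) {x : α} : x ∈ w ↔ x ∈ S := by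
  rw [← Finset.mem_val, ← mem_wordsOf.1 hw, Multiset.mem_coe]

lemma toFinset_of_mem_wordsOf (hw : w ∈ wordsOf S) : w.toFinset = S := by
  ext x
  rw [List.mem_toFinset, mem_iff_of_mem_wordsOf hw]

lemma List.Nodup.mem_wordsOf_toFinset (hw : w.Nodup) : w ∈ wordsOf w.toFinset := by
  rw [mem_wordsOf, List.toFinset_val, List.dedup_eq_self.2 hw]

lemma append_mem_wordsOf {A : Finset α} {u v : List α} (hA : A ⊆ S) (hu : u ∈ wordsOf A)
    (hv : v ∈ wordsOf (S \ A)) : u ++ v ∈ wordsOf S := by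
  rw [mem_wordsOf, ← Multiset.coe_add, mem_wordsOf.1 hu, mem_wordsOf.1 hv, Finset.sdiff_val,
    add_tsub_cancel_of_le (Finset.val_le_iff.2 hA)]

lemma drop_mem_wordsOf_sdiff (hw : w ∈ wordsOf S) (k : ℕ) :
    w.drop k ∈ wordsOf (S \ (w.take k).toFinset) := by
  have htake : (w.take k).Nodup := (nodup_of_mem_wordsOf hw).sublist (List.take_sublist _ _)
  rw [mem_wordsOf, Finset.sdiff_val, ← mem_wordsOf.1 hw, List.toFinset_val,
    List.dedup_eq_self.2 htake, ← List.take_append_drop k w, ← Multiset.coe_add,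
    List.take_append_drop, add_tsub_cancel_left]

lemma card_filter_wordsOf_take_drop {k : ℕ} (hk : k ≤ #S) (P Q : List α → Prop)
    [DecidablePred P] [DecidablePred Q] :
    #{w ∈ wordsOf S | P (w.take k) ∧ Q (w.drop k)}
      = ∑ A ∈ S.powersetCard k, #{u ∈ wordsOf A | P u} * #{v ∈ wordsOf (S \ A) | Q v} := by
  simp_rw [← card_product]
  rw [← card_sigma]
  refine card_bij' (fun w _ => ⟨(w.take k).toFinset, (w.take k, w.drop k)⟩)
    (fun p _ => p.2.1 ++ p.2.2) ?_ ?_ ?_ ?_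
  · intro w hw
    simp only [mem_filter] at hw
    obtain ⟨hwS, hP, hQ⟩ := hw
    have htake : (w.take k).Nodup := (nodup_of_mem_wordsOf hwS).sublist (List.take_sublist _ _)
    simp only [mem_sigma, mem_powersetCard, mem_product, mem_filter]
    refine ⟨⟨fun x hx => ?_, ?_⟩, ⟨htake.mem_wordsOf_toFinset, hP⟩,
      drop_mem_wordsOf_sdiff hwS k, hQ⟩
    · exact (mem_iff_of_mem_wordsOf hwS).1 (List.take_subset _ _ (List.mem_toFinset.1 hx))
    · rw [List.toFinset_card_of_nodup htake, List.length_take, length_of_mem_wordsOf hwS]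
      exact min_eq_left hk
  · rintro ⟨A, u, v⟩ hp
    simp only [mem_sigma, mem_powersetCard, mem_product, mem_filter] at hp
    obtain ⟨⟨hAS, hAk⟩, ⟨hu, hP⟩, hv, hQ⟩ := hp
    have hlen : u.length = k := by rw [length_of_mem_wordsOf hu, hAk]
    simp only [mem_filter, List.take_left' hlen, List.drop_left' hlen]
    exact ⟨append_mem_wordsOf hAS hu hv, hP, hQ⟩
  · intro w _
    exact List.take_append_drop k w
  · rintro ⟨A, u, v⟩ hp
    simp only [mem_sigma, mem_powersetCard, mem_product, mem_filter] at hp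
    obtain ⟨⟨-, hAk⟩, ⟨hu, -⟩, -⟩ := hp
    have hlen : u.length = k := by rw [length_of_mem_wordsOf hu, hAk]
    simp only [List.take_left' hlen, List.drop_left' hlen]
    rw [toFinset_of_mem_wordsOf hu]

lemma card_filter_wordsOf_and_mem (P : List α → Prop) [DecidablePred P] (a : α) :
    #{u ∈ wordsOf S | P u ∧ a ∈ u} = if a ∈ S then #{u ∈ wordsOf S | P u} else 0 := by
  split_ifs with ha
  · congr 1
    refine filter_congr fun u hu => ?_
    rw [mem_iff_of_mem_wordsOf hu]
    exact and_iff_left ha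
  · rw [card_eq_zero, filter_eq_empty_iff]
    exact fun u hu h => ha ((mem_iff_of_mem_wordsOf hu).1 h.2)

lemma card_filter_wordsOf_head?_eq (a : α) (Q : List α → Prop) [DecidablePred Q] :
    #{w ∈ wordsOf S | w.head? = some a ∧ Q w.tail}
      = if a ∈ S then #{v ∈ wordsOf (S.erase a) | Q v} else 0 := by
  split_ifs with ha
  · refine card_nbij' List.tail (List.cons a) ?_ ?_ ?_ ?_
    · intro w hw
      simp only [coe_filter, Set.mem_ofPred_eq] at hw ⊢
      obtain ⟨hwS, hhead, hQ⟩ := hw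
      refine ⟨?_, hQ⟩
      rw [mem_wordsOf, Finset.erase_val, ← mem_wordsOf.1 hwS,
        ← List.cons_head?_tail (Option.mem_def.2 hhead), Multiset.coe_erase, List.tail_cons,
        List.erase_cons_head]
    · intro v hv
      simp only [coe_filter, Set.mem_ofPred_eq] at hv ⊢
      refine ⟨?_, rfl, hv.2⟩
      rw [mem_wordsOf, ← Multiset.cons_coe, mem_wordsOf.1 hv.1, Finset.erase_val,
        Multiset.cons_erase ha]
    · intro w hw
      simp only [coe_filter, Set.mem_ofPred_eq] at hw
      exact List.cons_head?_tail (Option.mem_def.2 hw.2.1)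
    · intro v _
      rfl
  · rw [card_eq_zero, filter_eq_empty_iff]
    intro w hw h
    exact ha ((mem_iff_of_mem_wordsOf hw).1 (List.mem_of_mem_head? h.1))

end Words

section Subsets

variable {α : Type*} [DecidableEq α] {S : Finset α}

lemma filter_notMem_powersetCard (b : α) (k : ℕ) :
    {A ∈ S.powersetCard k | b ∉ A} = (S.erase b).powersetCard k := by
  ext A
  simp only [mem_filter, mem_powersetCard, subset_erase]
  tauto

lemma card_filter_notMem_powersetCard {b : α} (hb : b ∈ S) (k : ℕ) :
    #{A ∈ S.powersetCard k | b ∉ A} = (#S - 1).choose k := by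
  rw [filter_notMem_powersetCard, card_powersetCard, card_erase_of_mem hb]

lemma card_filter_mem_notMem_powersetCard {a b : α} (ha : a ∈ S) (hb : b ∈ S) (hab : a ≠ b)
    (k : ℕ) :
    #{A ∈ S.powersetCard (k + 1) | a ∈ A ∧ b ∉ A} = (#S - 2).choose k := by
  have hab : a ∈ S.erase b := mem_erase.2 ⟨hab, ha⟩
  simp_rw [← singleton_subset_iff (a := a)]
  rw [← filter_filter, filter_comm, filter_notMem_powersetCard,
    card_filter_powersetCard_subset _ _ _ (singleton_subset_iff.2 hab) (by simp),
    card_singleton, card_erase_of_mem hb, Nat.add_sub_cancel, Nat.sub_sub]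

end Subsets

def BT.numHeapOrderings : BT → ℕ
  | .nil => 1
  | .nd l r => (l.nodes + r.nodes).choose l.nodes * l.numHeapOrderings * r.numHeapOrderings

section Admissible

variable {α : Type*} [LinearOrder α] {S : Finset α} {u w : List α}

lemma minimum_eq_minimum_iff_min'_mem (hS : S.Nonempty) (hw : w ∈ wordsOf S) (hu : u ⊆ w) :
    u.minimum = w.minimum ↔ S.min' hS ∈ u := by
  have hw_min : w.minimum = S.min' hS := List.minimum_eq_coe_iff.2
    ⟨(mem_iff_of_mem_wordsOf hw).2 (S.min'_mem hS),
      fun b hb => S.min'_le b ((mem_iff_of_mem_wordsOf hw).1 hb)⟩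
  rw [hw_min, List.minimum_eq_coe_iff]
  exact ⟨And.left, fun h => ⟨h, fun b hb => S.min'_le b ((mem_iff_of_mem_wordsOf hw).1 (hu hb))⟩⟩

lemma maximum_eq_maximum_iff_max'_mem (hS : S.Nonempty) (hw : w ∈ wordsOf S) (hu : u ⊆ w) :
    u.maximum = w.maximum ↔ S.max' hS ∈ u := by
  have hw_max : w.maximum = S.max' hS := List.maximum_eq_coe_iff.2
    ⟨(mem_iff_of_mem_wordsOf hw).2 (S.max'_mem hS),
      fun b hb => S.le_max' b ((mem_iff_of_mem_wordsOf hw).1 hb)⟩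
  rw [hw_max, List.maximum_eq_coe_iff]
  exact ⟨And.left, fun h => ⟨h, fun b hb => S.le_max' b ((mem_iff_of_mem_wordsOf hw).1 (hu hb))⟩⟩

end Admissible

lemma admB_nd_iff {S : Finset ℕ} (hS : S.Nonempty) {w : List ℕ} (hw : w ∈ wordsOf S) (l r : BT) :
    admB (.nd l r) w ↔
      (admB l (w.take (l.nodes + 1)) ∧ S.min' hS ∈ w.take (l.nodes + 1)) ∧
        (admB r (w.drop (l.nodes + 1)) ∧ S.max' hS ∈ w.drop (l.nodes + 1)) := by
  simp only [admB, Bool.and_eq_true, decide_eq_true_eq,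
    minimum_eq_minimum_iff_min'_mem hS hw (List.take_subset _ _),
    maximum_eq_maximum_iff_max'_mem hS hw (List.drop_subset _ _)]
  tauto

lemma card_filter_admB_wordsOf (t : BT) {S : Finset ℕ} (hS : #S = t.nodes + 1) :
    #{w ∈ wordsOf S | admB t w} = t.numHeapOrderings := by
  induction t generalizing S with
  | nil =>
    have hall : ∀ w ∈ wordsOf S, admB .nil w = true := fun _ _ => rfl
    rw [filter_true_of_mem hall, card_wordsOf, hS]
    rfl
  | nd l r ihl ihr =>
    have hcard : #S = l.nodes + 1 + (r.nodes + 1) := by rw [hS, BT.nodes]; ring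
    have hSne : S.Nonempty := card_pos.1 (by omega)
    have hmM : S.min' hSne ≠ S.max' hSne := (S.min'_lt_max'_of_card (by omega)).ne
    rw [filter_congr fun w hw => admB_nd_iff hSne hw l r,
      card_filter_wordsOf_take_drop (by omega) (fun u => admB l u ∧ S.min' hSne ∈ u)
        (fun v => admB r v ∧ S.max' hSne ∈ v)]
    calc ∑ A ∈ S.powersetCard (l.nodes + 1),
          #{u ∈ wordsOf A | admB l u ∧ S.min' hSne ∈ u}
            * #{v ∈ wordsOf (S \ A) | admB r v ∧ S.max' hSne ∈ v}
        = ∑ A ∈ S.powersetCard (l.nodes + 1), if S.min' hSne ∈ A ∧ S.max' hSne ∉ A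
            then l.numHeapOrderings * r.numHeapOrderings else 0 := by
          refine sum_congr rfl fun A hA => ?_
          obtain ⟨hAS, hAcard⟩ := mem_powersetCard.1 hA
          rw [card_filter_wordsOf_and_mem, card_filter_wordsOf_and_mem, ihl hAcard,
            ihr (by rw [card_sdiff_of_subset hAS]; omega), ite_zero_mul_ite_zero]
          simp only [mem_sdiff, S.max'_mem hSne, true_and]
      _ = (BT.nd l r).numHeapOrderings := by
          rw [← sum_filter, sum_const, smul_eq_mul, card_filter_mem_notMem_powersetCard
            (S.min'_mem hSne) (S.max'_mem hSne) hmM, BT.numHeapOrderings, mul_assoc]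
          congr 2
          omega

lemma foldr_max_mem {w : List ℕ} (hw : w ≠ []) : w.foldr max 0 ∈ w :=
  List.maximum_mem (List.foldr_max_of_ne_nil hw).symm

lemma dtShapeAux_congr {f g : ℕ} {w : List ℕ} (hf : w.length ≤ f) (hg : w.length ≤ g) :
    dtShapeAux f w = dtShapeAux g w := by
  induction f generalizing g w with
  | zero =>
    rw [List.eq_nil_of_length_eq_zero (Nat.le_zero.1 hf)]
    cases g <;> rfl
  | succ f ih =>
    cases g with
    | zero =>
      rw [List.eq_nil_of_length_eq_zero (Nat.le_zero.1 hg)]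
      rfl
    | succ g =>
      by_cases hw : w = []
      · simp only [dtShapeAux, if_pos hw]
      · have hi : w.idxOf (w.foldr max 0) < w.length :=
          List.idxOf_lt_length_iff.2 (foldr_max_mem hw)
        simp only [dtShapeAux, if_neg hw]
        congr 1 <;> exact ih (by simp; omega) (by simp; omega)

lemma dtShapeAux_eq_dtShape {f : ℕ} {w : List ℕ} (h : w.length ≤ f) :
    dtShapeAux f w = dtShape w :=
  dtShapeAux_congr h le_rfl


lemma dtShape_of_ne_nil {w : List ℕ} (hw : w ≠ []) :
    dtShape w = .nd (dtShape (w.take (w.idxOf (w.foldr max 0))))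
      (dtShape (w.drop (w.idxOf (w.foldr max 0) + 1))) := by
  obtain ⟨L, hL⟩ := Nat.exists_eq_succ_of_ne_zero (List.length_pos_iff.2 hw).ne'
  have hi := List.idxOf_lt_length_iff.2 (foldr_max_mem hw)
  rw [dtShape, hL, dtShapeAux, if_neg hw]
  dsimp only
  rw [dtShapeAux_eq_dtShape (by simp; omega), dtShapeAux_eq_dtShape (by simp; omega)]

lemma nodes_dtShape (w : List ℕ) : (dtShape w).nodes = w.length := by
  induction hn : w.length using Nat.strong_induction_on generalizing w with
  | _ n ih =>
    by_cases hw : w = []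
    · subst hw
      rw [← hn]
      rfl
    · have hi := List.idxOf_lt_length_iff.2 (foldr_max_mem hw)
      rw [dtShape_of_ne_nil hw, BT.nodes, ih _ (by simp; omega) _ rfl,
        ih _ (by simp; omega) _ rfl]
      simp only [List.length_take, List.length_drop]
      omega

lemma dtShape_eq_nd_iff {S : Finset ℕ} (hS : S.Nonempty) {w : List ℕ} (hw : w ∈ wordsOf S)
    (l r : BT) :
    dtShape w = .nd l r ↔
      dtShape (w.take l.nodes) = l ∧ (w.drop l.nodes).head? = some (S.max' hS) ∧
        dtShape (w.drop l.nodes).tail = r := by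
  set M := S.max' hS
  have hMw : M ∈ w := (mem_iff_of_mem_wordsOf hw).2 (S.max'_mem hS)
  have hfold : w.foldr max 0 = M := le_antisymm
    (List.max_le_of_forall_le _ _ fun x hx => S.le_max' x ((mem_iff_of_mem_wordsOf hw).1 hx))
    (List.le_max_of_le hMw le_rfl)
  have hi : w.idxOf M < w.length := List.idxOf_lt_length_iff.2 hMw
  rw [dtShape_of_ne_nil (List.ne_nil_of_mem hMw), hfold, ← List.tail_drop]
  constructor
  · intro h
    injection h with hl hr
    have hk : l.nodes = w.idxOf M := by
      rw [← hl, nodes_dtShape, List.length_take, min_eq_left hi.le]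
    rw [hk, List.head?_drop, List.getElem?_eq_getElem hi, List.getElem_idxOf hi]
    exact ⟨hl, rfl, hr⟩
  · rintro ⟨hl, hhead, hr⟩
    rw [List.head?_drop, List.getElem?_eq_some_iff] at hhead
    obtain ⟨hk, hkM⟩ := hhead
    have hidx : w.idxOf M = l.nodes := by
      rw [← hkM, (nodup_of_mem_wordsOf hw).idxOf_getElem]
    rw [hidx, hl, hr]

lemma card_filter_dtShape_wordsOf (t : BT) {S : Finset ℕ} (hS : #S = t.nodes) :
    #{w ∈ wordsOf S | dtShape w = t} = t.numHeapOrderings := by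
  induction t generalizing S with
  | nil =>
    have hall : ∀ w ∈ wordsOf S, dtShape w = .nil := fun w hw => by
      rw [List.eq_nil_of_length_eq_zero ((length_of_mem_wordsOf hw).trans hS)]
      rfl
    rw [filter_true_of_mem hall, card_wordsOf, hS]
    rfl
  | nd l r ihl ihr =>
    have hcard : #S = l.nodes + r.nodes + 1 := hS
    have hSne : S.Nonempty := card_pos.1 (by omega)
    set M := S.max' hSne
    rw [filter_congr fun w hw => dtShape_eq_nd_iff hSne hw l r,
      card_filter_wordsOf_take_drop (by omega) (fun u => dtShape u = l)
        (fun v => v.head? = some M ∧ dtShape v.tail = r)]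
    calc ∑ A ∈ S.powersetCard l.nodes, #{u ∈ wordsOf A | dtShape u = l}
            * #{v ∈ wordsOf (S \ A) | v.head? = some M ∧ dtShape v.tail = r}
        = ∑ A ∈ S.powersetCard l.nodes,
            if M ∉ A then l.numHeapOrderings * r.numHeapOrderings else 0 := by
          refine sum_congr rfl fun A hA => ?_
          obtain ⟨hAS, hAcard⟩ := mem_powersetCard.1 hA
          rw [ihl hAcard, card_filter_wordsOf_head?_eq M (fun v => dtShape v = r)]
          by_cases hMA : M ∈ A
          · simp only [mem_sdiff, hMA, not_true_eq_false, and_false, if_false, mul_zero]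
          · have hMS : M ∈ S \ A := mem_sdiff.2 ⟨S.max'_mem hSne, hMA⟩
            have hcardr : #((S \ A).erase M) = r.nodes := by
              rw [card_erase_of_mem hMS, card_sdiff_of_subset hAS]
              omega
            rw [if_pos hMS, if_pos hMA, ihr hcardr]
      _ = (BT.nd l r).numHeapOrderings := by
          rw [← sum_filter, sum_const, smul_eq_mul,
            card_filter_notMem_powersetCard (S.max'_mem hSne), BT.numHeapOrderings, mul_assoc]
          congr 2
          omega

lemma permWords_eq_wordsOf (n : ℕ) : permWords n = wordsOf (Finset.Icc 1 n) := by
  have hperm : (List.range' 1 n).Perm (Finset.Icc 1 n).toList := by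
    refine (List.perm_ext_iff_of_nodup List.nodup_range' (Finset.nodup_toList _)).2 fun x => ?_
    rw [List.mem_range'_1, Finset.mem_toList, Finset.mem_Icc]
    omega
  exact List.toFinset_eq_of_perm _ _ hperm.permutations

theorem stmt14 : ∀ t : BT, ∀ n : ℕ, t.nodes + 1 = n → 2 ≤ n →
    ((permWords n).filter (fun w => admB t w = true)).card
      = ((permWords (n - 1)).filter (fun w => dtShape w = t)).card := by
  intro t n hn _
  rw [permWords_eq_wordsOf, permWords_eq_wordsOf,
    card_filter_admB_wordsOf t (by rw [Nat.card_Icc]; omega),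
    card_filter_dtShape_wordsOf t (by rw [Nat.card_Icc]; omega)]
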